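/- arXiv:1012.0704 — 3 statements merged into one kernel-verified Lean document; each statement's English description precedes it below -/
import Mathlib

section
/- Let L and G be self-adjoint operators on a Hilbert space with G(D_L) ⊆ D_L ⊆ D_G, and let {λ_k} and {u_k} be the eigenvalues and an orthonormal basis of eigenvectors of L. Then for each j, the sum over all k with λ_k ≠ λ_j of |⟨[L,G]u_j, u_k⟩|² / (λ_k − λ_j) equals −(1/2)⟨[[L,G],G]u_j, u_j⟩. -/
open scoped RealInnerProductSpace

/-!
With `C = [L, G]`, the eigenvalue equations give `⟪C u_j, u_k⟫ = (λ_k - λ_j) ⟪G u_j, u_k⟫`, so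
each term of the sum equals `⟪G u_j, u_k⟫ ⟪u_k, C u_j⟫`, and these terms vanish whenever
`λ_k = λ_j`. Parseval sums them over all `k` to `⟪G u_j, C u_j⟫`. Since `C` is skew-symmetric,
`⟪[C, G] u_j, u_j⟫ = -2 ⟪G u_j, C u_j⟫`.
-/

namespace LinearMap

variable {𝕜 E : Type*} [RCLike 𝕜] [NormedAddCommGroup E] [InnerProductSpace 𝕜 E]

open scoped InnerProductSpace in
theorem IsSymmetric.inner_commutator_apply_eq_neg {L G : E →ₗ[𝕜] E} (hL : L.IsSymmetric)
    (hG : G.IsSymmetric) (x y : E) :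
    ⟪(L ∘ₗ G - G ∘ₗ L) x, y⟫_𝕜 = -⟪x, (L ∘ₗ G - G ∘ₗ L) y⟫_𝕜 := by
  simp only [sub_apply, comp_apply, inner_sub_left, inner_sub_right, hL _, hG _]
  ring

end LinearMap

section Real

variable {E : Type*} [NormedAddCommGroup E] [InnerProductSpace ℝ E]

theorem inner_commutator_apply_self_of_skew {C G : E →ₗ[ℝ] E}
    (hC : ∀ x y, ⟪C x, y⟫ = -⟪x, C y⟫) (hG : G.IsSymmetric) (x : E) :
    ⟪(C ∘ₗ G - G ∘ₗ C) x, x⟫ = -2 * ⟪G x, C x⟫ := by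
  simp only [LinearMap.sub_apply, LinearMap.comp_apply, inner_sub_left, hC (G x), hG (C x),
    real_inner_comm (C x)]
  ring

theorem inner_commutator_apply_eigenvector {L G : E →ₗ[ℝ] E} (hL : L.IsSymmetric)
    {u v : E} {μ ν : ℝ} (hu : L u = μ • u) (hv : L v = ν • v) :
    ⟪(L ∘ₗ G - G ∘ₗ L) u, v⟫ = (ν - μ) * ⟪G u, v⟫ := by
  simp only [LinearMap.sub_apply, LinearMap.comp_apply, inner_sub_left, hL (G u), hv, hu,
    map_smul, real_inner_smul_left, real_inner_smul_right]
  ring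

end Real

theorem levitin_parnovski_identity_general
    {H : Type*} [NormedAddCommGroup H] [InnerProductSpace ℝ H]
    (L G : H →ₗ[ℝ] H) (hL : L.IsSymmetric) (hG : G.IsSymmetric)
    (b : HilbertBasis ℕ ℝ H)
    (lam : ℕ → ℝ) (heig : ∀ k, L (b k) = lam k • b k)
    (j : ℕ) :
    ∑' k : {k : ℕ // lam k ≠ lam j},
        ⟪(L ∘ₗ G - G ∘ₗ L) (b j), b (k : ℕ)⟫ ^ 2 / (lam (k : ℕ) - lam j)
      = -(1 / 2) *
        ⟪((L ∘ₗ G - G ∘ₗ L) ∘ₗ G - G ∘ₗ (L ∘ₗ G - G ∘ₗ L)) (b j), b j⟫ := by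
  set C := L ∘ₗ G - G ∘ₗ L
  have hCb : ∀ k, ⟪b k, C (b j)⟫ = (lam k - lam j) * ⟪G (b j), b k⟫ := fun k => by
    rw [real_inner_comm]
    exact inner_commutator_apply_eigenvector hL (heig j) (heig k)
  have hsupp : (fun k => ⟪G (b j), b k⟫ * ⟪b k, C (b j)⟫).support ⊆ {k | lam k ≠ lam j} :=
    fun k hk hkj => hk (by simp [hCb, hkj])
  calc ∑' k : {k : ℕ // lam k ≠ lam j}, ⟪C (b j), b k⟫ ^ 2 / (lam k - lam j)
      = ∑' k : {k : ℕ // lam k ≠ lam j}, ⟪G (b j), b k⟫ * ⟪b k, C (b j)⟫ := by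
        refine tsum_congr fun k => ?_
        have hk : lam k - lam j ≠ 0 := sub_ne_zero.2 k.2
        rw [real_inner_comm, hCb]
        field_simp
    _ = ∑' k, ⟪G (b j), b k⟫ * ⟪b k, C (b j)⟫ := tsum_subtype_eq_of_support_subset hsupp
    _ = ⟪G (b j), C (b j)⟫ := b.tsum_inner_mul_inner _ _
    _ = -(1 / 2) * ⟪(C ∘ₗ G - G ∘ₗ C) (b j), b j⟫ := by
        rw [inner_commutator_apply_self_of_skew (hL.inner_commutator_apply_eq_neg hG) hG]
        ring

/-- Levitin–Parnovski identity: for self-adjoint `L`, `G` and an orthonormal (Hilbert)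
basis `{u_k}` of eigenvectors of `L` with eigenvalues `λ_k`, for each `j`,
`Σ_{k : λ_k ≠ λ_j} |⟨[L,G]u_j, u_k⟩|² / (λ_k − λ_j) = −(1/2)⟨[[L,G],G]u_j, u_j⟩`. -/
theorem levitin_parnovski_identity
    {H : Type*} [NormedAddCommGroup H] [InnerProductSpace ℝ H] [CompleteSpace H]
    (L G : H →ₗ[ℝ] H) (hL : L.IsSymmetric) (hG : G.IsSymmetric)
    (b : HilbertBasis ℕ ℝ H)
    (lam : ℕ → ℝ) (heig : ∀ k, L (b k) = lam k • b k)
    (j : ℕ) :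
    ∑' k : {k : ℕ // lam k ≠ lam j},
        ⟪(L ∘ₗ G - G ∘ₗ L) (b j), b (k : ℕ)⟫ ^ 2 / (lam (k : ℕ) - lam j)
      = -(1 / 2) *
        ⟪((L ∘ₗ G - G ∘ₗ L) ∘ₗ G - G ∘ₗ (L ∘ₗ G - G ∘ₗ L)) (b j), b j⟫ :=
  levitin_parnovski_identity_general L G hL hG b lam heig j
end

section
/- For a self-adjoint operator L with orthonormal eigenbasis {u_k}, eigenvalues λ_k, and a self-adjoint operator G satisfying the domain conditions, for any fixed j and any index l ≥ 1 such that ⟨[L,G]u_j, u_{j+k}⟩ = 0 for all 1 ≤ k ≤ l−1, one has −(1/2)⟨[[L,G],G]u_j, u_j⟩ ≤ (λ_{j+l} − λ_j)^{-1} ‖[L,G]u_j‖², provided λ_{j+l} > λ_j. -/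
/-!
Every term of the Levitin–Parnovski sum with `λ_k < λ_j` is nonpositive, the terms with
`j < k < j + l` vanish by hypothesis, and every remaining term has `λ_k − λ_j ≥ λ_{j+l} − λ_j`.
Hence the sum is at most `(λ_{j+l} − λ_j)⁻¹ ∑_k ⟨[L,G]u_j, u_k⟩²`, which Bessel's inequality
bounds by `(λ_{j+l} − λ_j)⁻¹ ‖[L,G]u_j‖²`.
-/

open scoped RealInnerProductSpace

/-- The `tsum` of a non-summable family is `0`. -/
theorem tsum_le_tsum_of_summable_nonneg {ι : Type*} {f g : ι → ℝ} (h : ∀ i, f i ≤ g i)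
    (hg : Summable g) (hg0 : ∀ i, 0 ≤ g i) : ∑' i, f i ≤ ∑' i, g i := by
  by_cases hf : Summable f
  · exact hf.tsum_le_tsum h hg
  · rw [tsum_eq_zero_of_not_summable hf]
    exact tsum_nonneg hg0

theorem Orthonormal.summable_inner_sq {ι H : Type*} [NormedAddCommGroup H]
    [InnerProductSpace ℝ H] {v : ι → H} (hv : Orthonormal ℝ v) (x : H) :
    Summable fun i => ⟪x, v i⟫ ^ 2 := by
  simpa [real_inner_comm] using hv.inner_products_summable x

theorem Orthonormal.tsum_inner_sq_le {ι H : Type*} [NormedAddCommGroup H]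
    [InnerProductSpace ℝ H] {v : ι → H} (hv : Orthonormal ℝ v) (x : H) :
    ∑' i, ⟪x, v i⟫ ^ 2 ≤ ‖x‖ ^ 2 := by
  simpa [real_inner_comm] using hv.tsum_inner_products_le x

/-- The case `λ_k = λ_j` is covered by the convention `a / 0 = 0`. -/
theorem sq_div_sub_le_inv_gap_mul_sq {lam x : ℕ → ℝ} {j l : ℕ} (hmono : Monotone lam)
    (hx : ∀ k, j < k → k < j + l → x k = 0) (hgap : lam j < lam (j + l)) (k : ℕ) :
    x k ^ 2 / (lam k - lam j) ≤ (lam (j + l) - lam j)⁻¹ * x k ^ 2 := by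
  have hgap' : 0 < lam (j + l) - lam j := sub_pos.mpr hgap
  rcases le_or_gt (lam k) (lam j) with hle | hlt
  · calc x k ^ 2 / (lam k - lam j) ≤ 0 :=
          div_nonpos_of_nonneg_of_nonpos (sq_nonneg _) (sub_nonpos.mpr hle)
      _ ≤ (lam (j + l) - lam j)⁻¹ * x k ^ 2 := by positivity
  have hjk : j < k := hmono.reflect_lt hlt
  rcases lt_or_ge k (j + l) with hkl | hkl
  · simp [hx k hjk hkl]
  · rw [div_eq_inv_mul]
    gcongr
    exact hmono hkl

theorem levitin_parnovski_gap_bound_general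
    {H : Type*} [NormedAddCommGroup H] [InnerProductSpace ℝ H]
    (L G : H →ₗ[ℝ] H)
    (b : HilbertBasis ℕ ℝ H)
    (lam : ℕ → ℝ) (hmono : Monotone lam)
    (j l : ℕ)
    (hLP : ∑' k : {k : ℕ // lam k ≠ lam j},
        ⟪(L ∘ₗ G - G ∘ₗ L) (b j), b (k : ℕ)⟫ ^ 2 / (lam (k : ℕ) - lam j)
      = -(1 / 2) *
        ⟪((L ∘ₗ G - G ∘ₗ L) ∘ₗ G - G ∘ₗ (L ∘ₗ G - G ∘ₗ L)) (b j), b j⟫)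
    (horth : ∀ k, 1 ≤ k → k ≤ l - 1 → ⟪(L ∘ₗ G - G ∘ₗ L) (b j), b (j + k)⟫ = 0)
    (hgap : lam j < lam (j + l)) :
    -(1 / 2) *
        ⟪((L ∘ₗ G - G ∘ₗ L) ∘ₗ G - G ∘ₗ (L ∘ₗ G - G ∘ₗ L)) (b j), b j⟫
      ≤ (lam (j + l) - lam j)⁻¹ * ‖(L ∘ₗ G - G ∘ₗ L) (b j)‖ ^ 2 := by
  set v := (L ∘ₗ G - G ∘ₗ L) (b j)
  have hvanish : ∀ k, j < k → k < j + l → ⟪v, b k⟫ = 0 := fun k hjk hkl => by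
    simpa [Nat.add_sub_cancel' hjk.le] using horth (k - j) (by omega) (by omega)
  have hb : Orthonormal ℝ (b ∘ Subtype.val : {k : ℕ // lam k ≠ lam j} → H) :=
    b.orthonormal.comp _ Subtype.val_injective
  rw [← hLP]
  calc ∑' k : {k : ℕ // lam k ≠ lam j}, ⟪v, b k⟫ ^ 2 / (lam k - lam j)
      ≤ ∑' k : {k : ℕ // lam k ≠ lam j}, (lam (j + l) - lam j)⁻¹ * ⟪v, b k⟫ ^ 2 :=
        tsum_le_tsum_of_summable_nonneg
          (fun k => sq_div_sub_le_inv_gap_mul_sq hmono hvanish hgap k)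
          ((hb.summable_inner_sq v).mul_left _)
          (fun _ => mul_nonneg (inv_nonneg.mpr (sub_pos.mpr hgap).le) (sq_nonneg _))
    _ = (lam (j + l) - lam j)⁻¹ * ∑' k : {k : ℕ // lam k ≠ lam j}, ⟪v, b k⟫ ^ 2 := tsum_mul_left
    _ ≤ (lam (j + l) - lam j)⁻¹ * ‖v‖ ^ 2 := by
        gcongr
        exact hb.tsum_inner_sq_le v

/-- If the first `l−1` off-diagonal entries `⟨[L,G]u_j, u_{j+k}⟩` (1 ≤ k ≤ l−1) vanish and
`λ_{j+l} > λ_j`, then `−(1/2)⟨[[L,G],G]u_j, u_j⟩ ≤ (λ_{j+l} − λ_j)⁻¹ ‖[L,G]u_j‖²`.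
The Levitin–Parnovski identity is taken as an available hypothesis. -/
theorem levitin_parnovski_gap_bound
    {H : Type*} [NormedAddCommGroup H] [InnerProductSpace ℝ H] [CompleteSpace H]
    (L G : H →ₗ[ℝ] H) (hL : L.IsSymmetric) (hG : G.IsSymmetric)
    (b : HilbertBasis ℕ ℝ H)
    (lam : ℕ → ℝ) (hmono : Monotone lam)
    (heig : ∀ k, L (b k) = lam k • b k)
    (j l : ℕ) (hl : 1 ≤ l)
    (hLP : ∑' k : {k : ℕ // lam k ≠ lam j},
        ⟪(L ∘ₗ G - G ∘ₗ L) (b j), b (k : ℕ)⟫ ^ 2 / (lam (k : ℕ) - lam j)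
      = -(1 / 2) *
        ⟪((L ∘ₗ G - G ∘ₗ L) ∘ₗ G - G ∘ₗ (L ∘ₗ G - G ∘ₗ L)) (b j), b j⟫)
    (horth : ∀ k, 1 ≤ k → k ≤ l - 1 → ⟪(L ∘ₗ G - G ∘ₗ L) (b j), b (j + k)⟫ = 0)
    (hgap : lam j < lam (j + l)) :
    -(1 / 2) *
        ⟪((L ∘ₗ G - G ∘ₗ L) ∘ₗ G - G ∘ₗ (L ∘ₗ G - G ∘ₗ L)) (b j), b j⟫
      ≤ (lam (j + l) - lam j)⁻¹ * ‖(L ∘ₗ G - G ∘ₗ L) (b j)‖ ^ 2 :=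
  levitin_parnovski_gap_bound_general L G b lam hmono j l hLP horth hgap
end

section
/- Let X: (M^m, g) → R^n be an isometric immersion of a compact Riemannian manifold and ω a smooth p-form on M. Then the double commutator satisfies [[Δ_p, X_l], X_l]ω = −2|∇X_l|² ω for each component X_l of X. -/
/-!
Expanding the double commutator, the zeroth-order terms `(Δ X_l) ω` of the two single
commutators cancel, leaving `-2 (∇_{∇X_l}(X_l ω) - X_l ∇_{∇X_l} ω)`; by the Leibniz rule
this is `-2 |∇X_l|² ω`.
-/

section CommutatorCalculus

variable {R M : Type*} [CommRing R] [AddCommGroup M] [Module R M]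

theorem double_commutator_eq_neg_two_smul_of_commutator (L : M → M) (f a : R) (D : M → M)
    (hComm : ∀ ω : M, L (f • ω) - f • L ω = a • ω - (2 : ℤ) • D ω) (ω : M) :
    L (f • f • ω) - (2 : ℤ) • (f • L (f • ω)) + f • f • L ω
      = -((2 : ℤ) • (D (f • ω) - f • D ω)) := by
  have outer := hComm (f • ω)
  have inner := hComm ω
  rw [sub_eq_iff_eq_add] at outer inner
  rw [outer, inner]
  module

end CommutatorCalculus

/-- `F` models the smooth functions, `Forms` the smooth `p`-forms, `DGrad f = ∇_{∇f}` and
`gradInner f g = ⟨∇f, ∇g⟩`, so `gradInner X_l X_l = |∇X_l|²`. -/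
theorem hodge_double_commutator_multiplication
    {F Forms : Type*} [CommRing F] [AddCommGroup Forms] [Module F Forms]
    (Δp : Forms → Forms) (Δ : F → F) (DGrad : F → Forms → Forms)
    (gradInner : F → F → F)
    (hComm : ∀ (f : F) (ω : Forms),
      Δp (f • ω) - f • Δp ω = (Δ f) • ω - (2 : ℤ) • DGrad f ω)
    (hDerivation : ∀ (f g : F) (ω : Forms),
      DGrad f (g • ω) = (gradInner f g) • ω + g • DGrad f ω)
    (Xl : F) (ω : Forms) :
    Δp (Xl • Xl • ω) - (2 : ℤ) • (Xl • Δp (Xl • ω)) + Xl • Xl • Δp ω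
      = -((2 : ℤ) • ((gradInner Xl Xl) • ω)) := by
  rw [double_commutator_eq_neg_two_smul_of_commutator Δp Xl (Δ Xl) (DGrad Xl) (hComm Xl),
    hDerivation, add_sub_cancel_right]
end
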